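/- arXiv:2605.13326 — 2 statements merged into one kernel-verified Lean document; each statement's English description precedes it below -/
import Mathlib

section
/- Let X be a standardized k-Dirac mixture with k > 1, let γ = E[X³], let s** = γ/2, and let g** = Σ_{i=1}^k 1{μ_i ≤ s**}. Assume μ_1 ≤ s** ≤ μ_k (so that 1 ≤ g** ≤ k−1 and s** ∈ [μ_{g**}, μ_{g**+1}]). Then the approximate standardized folding ratio satisfies Φ**(X) = 4 · Var|X − s**| = 4 (1 − 4 α_{g**}² − 2 α_{g**} (1 − 2 η_{g**}) γ + η_{g**} (1 − η_{g**}) γ²). -/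
/-!
Under the mixture law every expectation is a finite weighted sum over the atoms. Since the atoms
are sorted, those not exceeding `s = γ / 2` are exactly `μ₁, …, μ_g`, so
`E|X - s| = E[X - s] + 2 E[(s - X) 1{X ≤ s}] = 2 (s η - α) - s`, while
`E|X - s|² = E[(X - s)²] = 1 + s²`. The variance is the difference of the second quantity and the
square of the first, and substituting `s = γ / 2` gives the stated polynomial.
-/

open MeasureTheory ProbabilityTheory Finset

section DiracMixture

variable {Ω ι : Type*} [MeasurableSpace Ω] {t : Finset ι} {w : ι → ℝ} {x : ι → Ω}

lemma isProbabilityMeasure_sum_smul_dirac (hw : ∀ i ∈ t, 0 ≤ w i) (hsum : ∑ i ∈ t, w i = 1) :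
    IsProbabilityMeasure (∑ i ∈ t, ENNReal.ofReal (w i) • Measure.dirac (x i)) := by
  constructor
  simp only [Measure.coe_finsetSum, Finset.sum_apply, Measure.smul_apply, measure_univ,
    smul_eq_mul, mul_one]
  rw [← ENNReal.ofReal_sum_of_nonneg hw, hsum, ENNReal.ofReal_one]

variable [MeasurableSingletonClass Ω]

lemma integrable_sum_smul_dirac (f : Ω → ℝ) :
    Integrable f (∑ i ∈ t, ENNReal.ofReal (w i) • Measure.dirac (x i)) :=
  integrable_finsetSum_measure.2 fun _ _ ↦
    (integrable_dirac enorm_lt_top).smul_measure ENNReal.ofReal_ne_top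

lemma integral_sum_smul_dirac (hw : ∀ i ∈ t, 0 ≤ w i) (f : Ω → ℝ) :
    ∫ a, f a ∂(∑ i ∈ t, ENNReal.ofReal (w i) • Measure.dirac (x i)) =
      ∑ i ∈ t, w i * f (x i) := by
  rw [integral_finsetSum_measure fun _ _ ↦
    (integrable_dirac enorm_lt_top).smul_measure ENNReal.ofReal_ne_top]
  refine sum_congr rfl fun i hi ↦ ?_
  rw [integral_smul_measure, integral_dirac, ENNReal.toReal_ofReal (hw i hi), smul_eq_mul]

lemma variance_sum_smul_dirac (hw : ∀ i ∈ t, 0 ≤ w i) (hsum : ∑ i ∈ t, w i = 1) (f : Ω → ℝ) :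
    variance f (∑ i ∈ t, ENNReal.ofReal (w i) • Measure.dirac (x i)) =
      ∑ i ∈ t, w i * f (x i) ^ 2 - (∑ i ∈ t, w i * f (x i)) ^ 2 := by
  have := isProbabilityMeasure_sum_smul_dirac (x := x) hw hsum
  have hf : MemLp f 2 (∑ i ∈ t, ENNReal.ofReal (w i) • Measure.dirac (x i)) :=
    (memLp_two_iff_integrable_sq (integrable_sum_smul_dirac f).aestronglyMeasurable).2
      (integrable_sum_smul_dirac _)
  rw [variance_eq_sub hf, integral_sum_smul_dirac hw, integral_sum_smul_dirac hw]
  rfl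

end DiracMixture

lemma filter_Icc_eq_Icc_card {p : ℕ → Prop} [DecidablePred p] {k : ℕ}
    (hp : ∀ i ∈ Icc 1 k, ∀ j ∈ Icc 1 k, i ≤ j → p j → p i) :
    {i ∈ Icc 1 k | p i} = Icc 1 #{i ∈ Icc 1 k | p i} := by
  induction k with
  | zero => simp
  | succ k ih =>
    have hsub : Icc 1 k ⊆ Icc 1 (k + 1) := Icc_subset_Icc_right k.le_succ
    have htop : k + 1 ∈ Icc 1 (k + 1) := by simp
    rw [← insert_Icc_right_eq_Icc_add_one (by omega), filter_insert]
    split_ifs with hk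
    · have hall : ∀ i ∈ Icc 1 k, p i := fun i hi ↦
        hp i (hsub hi) (k + 1) htop ((mem_Icc.1 hi).2.trans k.le_succ) hk
      rw [filter_true_of_mem hall, insert_Icc_right_eq_Icc_add_one (by omega), Nat.card_Icc,
        Nat.add_sub_cancel]
    · exact ih fun i hi j hj ↦ hp i (hsub hi) j (hsub hj)

lemma filter_le_Icc_eq_Icc_card {β : Type*} [Preorder β] [DecidableLE β] {μ : ℕ → β} {k : ℕ}
    (hμ : MonotoneOn μ (Set.Icc 1 k)) (c : β) :
    {i ∈ Icc 1 k | μ i ≤ c} = Icc 1 #{i ∈ Icc 1 k | μ i ≤ c} :=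
  filter_Icc_eq_Icc_card fun i hi j hj hij hjc ↦
    (hμ (by simpa using hi) (by simpa using hj) hij).trans hjc

section WeightedSums

variable {ι : Type*} (t : Finset ι) (w y : ι → ℝ) (c : ℝ)

lemma sum_mul_abs_sub : ∑ i ∈ t, w i * |y i - c| =
    ∑ i ∈ t, w i * y i - c * ∑ i ∈ t, w i +
      2 * (c * ∑ i ∈ t with y i ≤ c, w i - ∑ i ∈ t with y i ≤ c, w i * y i) := by
  have key : ∀ i, w i * |y i - c| = w i * y i - c * w i +
      2 * (c * (if y i ≤ c then w i else 0) - if y i ≤ c then w i * y i else 0) := by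
    intro i
    split_ifs with h
    · rw [abs_of_nonpos (sub_nonpos.2 h)]; ring
    · rw [abs_of_pos (sub_pos.2 (not_le.1 h))]; ring
  simp only [key, sum_add_distrib, sum_sub_distrib, ← mul_sum, sum_filter]

lemma sum_mul_sub_sq : ∑ i ∈ t, w i * (y i - c) ^ 2 =
    ∑ i ∈ t, w i * y i ^ 2 - 2 * c * ∑ i ∈ t, w i * y i + c ^ 2 * ∑ i ∈ t, w i := by
  have key : ∀ i, w i * (y i - c) ^ 2 = w i * y i ^ 2 - 2 * c * (w i * y i) + c ^ 2 * w i := by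
    intro i; ring
  simp only [key, sum_add_distrib, sum_sub_distrib, ← mul_sum]

end WeightedSums

theorem stmt_10_general (k : ℕ) (ε μ : ℕ → ℝ)
    (hε : ∀ i ∈ Finset.Icc 1 k, 0 < ε i)
    (hsum : ∑ i ∈ Finset.Icc 1 k, ε i = 1)
    (hord : ∀ i ∈ Finset.Ico 1 k, μ i < μ (i + 1))
    (P : Measure ℝ)
    (hP : P = ∑ i ∈ Finset.Icc 1 k, ENNReal.ofReal (ε i) • Measure.dirac (μ i))
    (hmean : ∫ x, x ∂P = 0) (hm2 : ∫ x, x ^ 2 ∂P = 1)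
    (γ sstarstar : ℝ) (hss : sstarstar = γ / 2)
    (gstarstar : ℕ)
    (hg : gstarstar = ∑ i ∈ Finset.Icc 1 k, if μ i ≤ sstarstar then 1 else 0)
    (α η : ℝ)
    (hα : α = ∑ i ∈ Finset.Icc 1 gstarstar, ε i * μ i)
    (hη : η = ∑ i ∈ Finset.Icc 1 gstarstar, ε i) :
    4 * variance (fun x => |x - sstarstar|) P =
      4 * (1 - 4 * α ^ 2 - 2 * α * (1 - 2 * η) * γ + η * (1 - η) * γ ^ 2) := by
  have hw : ∀ i ∈ Icc 1 k, 0 ≤ ε i := fun i hi ↦ (hε i hi).le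
  have hmono : MonotoneOn μ (Set.Icc 1 k) :=
    monotoneOn_of_le_succ Set.ordConnected_Icc fun i _ hi hsi ↦ by
      rw [Order.succ_eq_add_one] at hsi ⊢
      exact (hord i (by simp only [Set.mem_Icc] at hi hsi; simp only [mem_Ico]; omega)).le
  have hlower : {i ∈ Icc 1 k | μ i ≤ sstarstar} = Icc 1 gstarstar := by
    rw [hg, ← card_filter]
    exact filter_le_Icc_eq_Icc_card hmono sstarstar
  subst hP
  rw [integral_sum_smul_dirac hw] at hmean hm2
  rw [variance_sum_smul_dirac hw hsum]
  simp only [sq_abs]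
  rw [sum_mul_abs_sub, sum_mul_sub_sq, hlower, ← hα, ← hη, hmean, hm2, hsum, hss]
  ring

/-- For a standardized `k`-Dirac mixture `X` (law `P`), let `γ = E[X³]`,
`s⋆⋆ = γ / 2`, and `g⋆⋆ = Σ_{i=1}^k 1{μᵢ ≤ s⋆⋆}`. Assume `μ₁ ≤ s⋆⋆ ≤ μ_k`. Then the
approximate standardized folding ratio satisfies
`Φ⋆⋆(X) = 4 · Var |X - s⋆⋆|
        = 4 (1 - 4 α_{g⋆⋆}² - 2 α_{g⋆⋆} (1 - 2 η_{g⋆⋆}) γ + η_{g⋆⋆} (1 - η_{g⋆⋆}) γ²)`. -/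
theorem stmt_10 (k : ℕ) (hk : 1 < k) (ε μ : ℕ → ℝ)
    (hε : ∀ i ∈ Finset.Icc 1 k, 0 < ε i)
    (hsum : ∑ i ∈ Finset.Icc 1 k, ε i = 1)
    (hord : ∀ i ∈ Finset.Ico 1 k, μ i < μ (i + 1))
    (P : Measure ℝ)
    (hP : P = ∑ i ∈ Finset.Icc 1 k, ENNReal.ofReal (ε i) • Measure.dirac (μ i))
    (hmean : ∫ x, x ∂P = 0) (hm2 : ∫ x, x ^ 2 ∂P = 1)
    (γ sstarstar : ℝ) (hγ : γ = ∫ x, x ^ 3 ∂P) (hss : sstarstar = γ / 2)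
    (gstarstar : ℕ)
    (hg : gstarstar = ∑ i ∈ Finset.Icc 1 k, if μ i ≤ sstarstar then 1 else 0)
    (hlo : μ 1 ≤ sstarstar) (hhi : sstarstar ≤ μ k)
    (α η : ℝ)
    (hα : α = ∑ i ∈ Finset.Icc 1 gstarstar, ε i * μ i)
    (hη : η = ∑ i ∈ Finset.Icc 1 gstarstar, ε i) :
    4 * variance (fun x => |x - sstarstar|) P =
      4 * (1 - 4 * α ^ 2 - 2 * α * (1 - 2 * η) * γ + η * (1 - η) * γ ^ 2) :=
  stmt_10_general k ε μ hε hsum hord P hP hmean hm2 γ sstarstar hss gstarstar hg α η hα hη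
end

section
/- Let X be a standardized 3-Dirac mixture with ordered locations μ_1 < μ_2 < μ_3, probabilities ε_1, ε_2, ε_3 > 0 summing to 1, let s* denote the smallest minimizer of s ↦ Var|X − s|, and set α_2 = ε_1μ_1 + ε_2μ_2, η_2 = ε_1 + ε_2, and s_2 = (α_2/2)(1/η_2 − 1/(1−η_2)). Then (s* ∈ [μ_1, μ_2] and s_2 < μ_2) holds if and only if μ_1 < −((2ε_2 + 4ε_1ε_3)/√(4ε_1ε_3(ε_2 + 4ε_1ε_3)))·√(ε_3/(1−ε_3)). -/
open MeasureTheory ProbabilityTheory Set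

/-!
Between consecutive atoms, `Var|X - s| = 1 + s² - ((2η_g - 1)s - 2α_g)²` is a convex parabola in
`s` with vertex `s_g`, and outside `[μ₁, μ₃]` it is identically `1`. Since `μ₁ < 0`, the vertex
`s₁` lies to the right of `μ₁`, so the minimum over `[μ₁, μ₂]` is attained at `min s₁ μ₂` with a
value below `1`. If moreover `s₂ < μ₂`, the parabola on `[μ₂, μ₃]` is increasing, so `min s₁ μ₂`
is a global minimizer and the smallest one lies in `(μ₁, μ₂]`.

Using the two moment equations, `s₂ < μ₂` is equivalent to
`(μ₃ - μ₂)(ε₂ + 2ε₁ε₃) < -ε₁μ₁`; both sides are nonnegative, and squaring together with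
`ε₂ε₃(μ₃ - μ₂)² = (1 - ε₁)(1 - ε₁μ₁²) - ε₁²μ₁²` turns this into the stated bound on `μ₁`.
-/

/-- `s_g` of the paper, for `η = η_g` and `α = α_g`. -/
noncomputable def vertex (η α : ℝ) : ℝ := α / 2 * (1 / η - 1 / (1 - η))

/-- `Var|X - s|` for a standardized `X` when the atoms left of `s` carry mass `η` and first
moment `α`. -/
def pieceVar (η α s : ℝ) : ℝ := 1 + s ^ 2 - ((2 * η - 1) * s - 2 * α) ^ 2

noncomputable def threeDirac (ε₁ ε₂ ε₃ μ₁ μ₂ μ₃ : ℝ) : Measure ℝ :=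
  ENNReal.ofReal ε₁ • Measure.dirac μ₁ + ENNReal.ofReal ε₂ • Measure.dirac μ₂ +
    ENNReal.ofReal ε₃ • Measure.dirac μ₃

theorem variance_abs_sub {P : Measure ℝ} [IsProbabilityMeasure P] (hX : MemLp id 2 P)
    (hmean : ∫ x, x ∂P = 0) (hm2 : ∫ x, x ^ 2 ∂P = 1) (s : ℝ) :
    variance (fun x => |x - s|) P = 1 + s ^ 2 - (∫ x, |x - s| ∂P) ^ 2 := by
  have hsub : MemLp (fun x => x - s) 2 P := hX.sub (memLp_const s)
  have h1 : Integrable (fun x : ℝ => x) P := hX.integrable one_le_two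
  have h2 : Integrable (fun x : ℝ => x ^ 2) P := hX.integrable_sq
  rw [variance_eq_sub (show MemLp (fun x => |x - s|) 2 P from hsub.abs)]
  simp only [Pi.pow_apply, sq_abs, sub_sq, sub_left_inj]
  rw [integral_add (f := fun x => x ^ 2 - 2 * x * s) (h2.sub ((h1.const_mul 2).mul_const s))
      (integrable_const _),
    integral_sub (f := fun x => x ^ 2) h2 ((h1.const_mul 2).mul_const s), integral_mul_const,
    integral_const_mul]
  simp [hmean, hm2]

section ThreeDirac

variable {ε₁ ε₂ ε₃ μ₁ μ₂ μ₃ : ℝ}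

theorem integrable_ofReal_smul_dirac (f : ℝ → ℝ) (ε μ : ℝ) :
    Integrable f (ENNReal.ofReal ε • Measure.dirac μ) :=
  (integrable_dirac enorm_lt_top).smul_measure ENNReal.ofReal_ne_top

theorem integrable_threeDirac (f : ℝ → ℝ) : Integrable f (threeDirac ε₁ ε₂ ε₃ μ₁ μ₂ μ₃) :=
  ((integrable_ofReal_smul_dirac f ε₁ μ₁).add_measure
    (integrable_ofReal_smul_dirac f ε₂ μ₂)).add_measure (integrable_ofReal_smul_dirac f ε₃ μ₃)

theorem integral_threeDirac (hε₁ : 0 ≤ ε₁) (hε₂ : 0 ≤ ε₂) (hε₃ : 0 ≤ ε₃) (f : ℝ → ℝ) :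
    ∫ x, f x ∂threeDirac ε₁ ε₂ ε₃ μ₁ μ₂ μ₃ = ε₁ * f μ₁ + ε₂ * f μ₂ + ε₃ * f μ₃ := by
  have h := integrable_ofReal_smul_dirac f
  rw [threeDirac, integral_add_measure ((h _ _).add_measure (h _ _)) (h _ _),
    integral_add_measure (h _ _) (h _ _)]
  simp [integral_smul_measure, hε₁, hε₂, hε₃]

theorem isProbabilityMeasure_threeDirac (hε₁ : 0 ≤ ε₁) (hε₂ : 0 ≤ ε₂) (hε₃ : 0 ≤ ε₃)
    (hsum : ε₁ + ε₂ + ε₃ = 1) : IsProbabilityMeasure (threeDirac ε₁ ε₂ ε₃ μ₁ μ₂ μ₃) := by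
  constructor
  simp only [threeDirac, Measure.add_apply, Measure.smul_apply, measure_univ, smul_eq_mul,
    mul_one]
  rw [← ENNReal.ofReal_add hε₁ hε₂, ← ENNReal.ofReal_add (by positivity) hε₃, hsum,
    ENNReal.ofReal_one]

theorem memLp_id_threeDirac : MemLp id 2 (threeDirac ε₁ ε₂ ε₃ μ₁ μ₂ μ₃) :=
  (memLp_two_iff_integrable_sq aestronglyMeasurable_id).2 (integrable_threeDirac _)

theorem variance_abs_sub_threeDirac (hε₁ : 0 ≤ ε₁) (hε₂ : 0 ≤ ε₂) (hε₃ : 0 ≤ ε₃)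
    (hsum : ε₁ + ε₂ + ε₃ = 1) (hmean : ∫ x, x ∂threeDirac ε₁ ε₂ ε₃ μ₁ μ₂ μ₃ = 0)
    (hm2 : ∫ x, x ^ 2 ∂threeDirac ε₁ ε₂ ε₃ μ₁ μ₂ μ₃ = 1) (t : ℝ) :
    variance (fun x => |x - t|) (threeDirac ε₁ ε₂ ε₃ μ₁ μ₂ μ₃) =
      1 + t ^ 2 - (ε₁ * |μ₁ - t| + ε₂ * |μ₂ - t| + ε₃ * |μ₃ - t|) ^ 2 := by
  have := isProbabilityMeasure_threeDirac (μ₁ := μ₁) (μ₂ := μ₂) (μ₃ := μ₃) hε₁ hε₂ hε₃ hsum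
  rw [variance_abs_sub memLp_id_threeDirac hmean hm2, integral_threeDirac hε₁ hε₂ hε₃]

end ThreeDirac

section Parabola

variable {η : ℝ}

theorem pieceVar_eq_vertex_add (hη : η ∈ Ioo 0 1) (α s : ℝ) :
    pieceVar η α s = pieceVar η α (vertex η α) + 4 * η * (1 - η) * (s - vertex η α) ^ 2 := by
  have h0 : η ≠ 0 := hη.1.ne'
  have h1 : 1 - η ≠ 0 := (sub_pos.2 hη.2).ne'
  unfold pieceVar vertex
  field_simp
  ring

theorem strictMonoOn_pieceVar (hη : η ∈ Ioo 0 1) (α : ℝ) :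
    StrictMonoOn (pieceVar η α) (Ici (vertex η α)) := by
  intro x hx y hy hxy
  have hc : 0 < 4 * η * (1 - η) := by have := hη.1; have := sub_pos.2 hη.2; positivity
  rw [pieceVar_eq_vertex_add hη α x, pieceVar_eq_vertex_add hη α y]
  have : (x - vertex η α) ^ 2 < (y - vertex η α) ^ 2 :=
    pow_lt_pow_left₀ (by linarith) (sub_nonneg.2 hx) two_ne_zero
  gcongr

theorem strictAntiOn_pieceVar (hη : η ∈ Ioo 0 1) (α : ℝ) :
    StrictAntiOn (pieceVar η α) (Iic (vertex η α)) := by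
  intro x hx y hy hxy
  have hc : 0 < 4 * η * (1 - η) := by have := hη.1; have := sub_pos.2 hη.2; positivity
  rw [pieceVar_eq_vertex_add hη α x, pieceVar_eq_vertex_add hη α y]
  have : (vertex η α - y) ^ 2 < (vertex η α - x) ^ 2 :=
    pow_lt_pow_left₀ (by linarith) (sub_nonneg.2 hy) two_ne_zero
  rw [← neg_sub (vertex η α) y, ← neg_sub (vertex η α) x, neg_sq, neg_sq]
  gcongr

theorem pieceVar_min_vertex_le (hη : η ∈ Ioo 0 1) (α : ℝ) {b t : ℝ} (ht : t ≤ b) :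
    pieceVar η α (min (vertex η α) b) ≤ pieceVar η α t := by
  rcases le_total (vertex η α) b with hvb | hbv
  · rw [min_eq_left hvb, pieceVar_eq_vertex_add hη α t]
    have := hη.1; have := sub_pos.2 hη.2
    have : 0 ≤ 4 * η * (1 - η) * (t - vertex η α) ^ 2 := by positivity
    linarith
  · rw [min_eq_right hbv]
    exact (strictAntiOn_pieceVar hη α).antitoneOn (ht.trans hbv) hbv ht

theorem lt_vertex_mul_self (hη : η ∈ Ioo 0 1) {μ : ℝ} (hμ : μ < 0) : μ < vertex η (η * μ) := by
  have h0 : η ≠ 0 := hη.1.ne'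
  have h1 : 0 < 1 - η := sub_pos.2 hη.2
  have hv : vertex η (η * μ) = μ - μ / (2 * (1 - η)) := by
    unfold vertex
    field_simp
    ring
  rw [hv, lt_sub_iff_add_lt, add_lt_iff_neg_left]
  exact div_neg_of_neg_of_pos hμ (by positivity)

end Parabola

theorem smallest_minimizer_mem_Icc {F : ℝ → ℝ} {μ₁ μ₂ μ₃ η₁ α₁ η₂ α₂ s : ℝ}
    (hη₁ : η₁ ∈ Ioo 0 1) (hη₂ : η₂ ∈ Ioo 0 1) (h12 : μ₁ < μ₂)
    (hlow : ∀ t ≤ μ₁, F t = 1) (hhigh : ∀ t, μ₃ ≤ t → F t = 1)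
    (hleft : ∀ t ∈ Icc μ₁ μ₂, F t = pieceVar η₁ α₁ t)
    (hright : ∀ t ∈ Icc μ₂ μ₃, F t = pieceVar η₂ α₂ t)
    (hv₁ : μ₁ < vertex η₁ α₁) (hv₂ : vertex η₂ α₂ < μ₂)
    (hmin : ∀ t, F s ≤ F t) (hleast : ∀ t, (∀ u, F t ≤ F u) → s ≤ t) :
    s ∈ Icc μ₁ μ₂ := by
  set c := min (vertex η₁ α₁) μ₂
  have hc : c ∈ Icc μ₁ μ₂ := ⟨le_min hv₁.le h12.le, min_le_right _ _⟩
  have hFc_left : ∀ t ∈ Icc μ₁ μ₂, F c ≤ F t := fun t ht => by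
    rw [hleft c hc, hleft t ht]
    exact pieceVar_min_vertex_le hη₁ α₁ ht.2
  have hFc_lt_one : F c < 1 := by
    rw [← hlow μ₁ le_rfl, hleft c hc, hleft μ₁ ⟨le_rfl, h12.le⟩]
    exact strictAntiOn_pieceVar hη₁ α₁ hv₁.le (min_le_left _ _ : c ≤ _) (lt_min hv₁ h12)
  have hFc : ∀ t, F c ≤ F t := by
    intro t
    rcases le_total t μ₁ with ht1 | ht1
    · rw [hlow t ht1]; exact hFc_lt_one.le
    rcases le_total t μ₂ with ht2 | ht2
    · exact hFc_left t ⟨ht1, ht2⟩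
    rcases le_total t μ₃ with ht3 | ht3
    · calc F c ≤ F μ₂ := hFc_left μ₂ ⟨h12.le, le_rfl⟩
        _ = pieceVar η₂ α₂ μ₂ := hright μ₂ ⟨le_rfl, ht2.trans ht3⟩
        _ ≤ pieceVar η₂ α₂ t :=
          (strictMonoOn_pieceVar hη₂ α₂).monotoneOn hv₂.le (hv₂.le.trans ht2) ht2
        _ = F t := (hright t ⟨ht2, ht3⟩).symm
    · rw [hhigh t ht3]; exact hFc_lt_one.le
  refine ⟨le_of_not_ge fun hs => ?_, (hleast c hFc).trans hc.2⟩
  have := hmin c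
  rw [hlow s hs] at this
  linarith

section ThreeAtoms

variable {ε₁ ε₂ ε₃ μ₁ μ₂ μ₃ t : ℝ}

theorem sum_abs_sub_of_le (hsum : ε₁ + ε₂ + ε₃ = 1) (hmean : ε₁ * μ₁ + ε₂ * μ₂ + ε₃ * μ₃ = 0)
    (h₁ : t ≤ μ₁) (h₂ : t ≤ μ₂) (h₃ : t ≤ μ₃) :
    ε₁ * |μ₁ - t| + ε₂ * |μ₂ - t| + ε₃ * |μ₃ - t| = -t := by
  rw [abs_of_nonneg (sub_nonneg.2 h₁), abs_of_nonneg (sub_nonneg.2 h₂),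
    abs_of_nonneg (sub_nonneg.2 h₃)]
  linear_combination hmean - t * hsum

theorem sum_abs_sub_of_mem_Icc₁₂ (hsum : ε₁ + ε₂ + ε₃ = 1)
    (hmean : ε₁ * μ₁ + ε₂ * μ₂ + ε₃ * μ₃ = 0) (h₁ : μ₁ ≤ t) (h₂ : t ≤ μ₂) (h₃ : t ≤ μ₃) :
    ε₁ * |μ₁ - t| + ε₂ * |μ₂ - t| + ε₃ * |μ₃ - t| = (2 * ε₁ - 1) * t - 2 * (ε₁ * μ₁) := by
  rw [abs_of_nonpos (sub_nonpos.2 h₁), abs_of_nonneg (sub_nonneg.2 h₂),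
    abs_of_nonneg (sub_nonneg.2 h₃)]
  linear_combination hmean - t * hsum

theorem sum_abs_sub_of_mem_Icc₂₃ (hsum : ε₁ + ε₂ + ε₃ = 1)
    (hmean : ε₁ * μ₁ + ε₂ * μ₂ + ε₃ * μ₃ = 0) (h₁ : μ₁ ≤ t) (h₂ : μ₂ ≤ t) (h₃ : t ≤ μ₃) :
    ε₁ * |μ₁ - t| + ε₂ * |μ₂ - t| + ε₃ * |μ₃ - t| =
      (2 * (ε₁ + ε₂) - 1) * t - 2 * (ε₁ * μ₁ + ε₂ * μ₂) := by
  rw [abs_of_nonpos (sub_nonpos.2 h₁), abs_of_nonpos (sub_nonpos.2 h₂),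
    abs_of_nonneg (sub_nonneg.2 h₃)]
  linear_combination hmean - t * hsum

theorem sum_abs_sub_of_ge (hsum : ε₁ + ε₂ + ε₃ = 1) (hmean : ε₁ * μ₁ + ε₂ * μ₂ + ε₃ * μ₃ = 0)
    (h₁ : μ₁ ≤ t) (h₂ : μ₂ ≤ t) (h₃ : μ₃ ≤ t) :
    ε₁ * |μ₁ - t| + ε₂ * |μ₂ - t| + ε₃ * |μ₃ - t| = t := by
  rw [abs_of_nonpos (sub_nonpos.2 h₁), abs_of_nonpos (sub_nonpos.2 h₂),
    abs_of_nonpos (sub_nonpos.2 h₃)]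
  linear_combination t * hsum - hmean

theorem sub_vertex_eq (hε₁ : 0 < ε₁) (hε₂ : 0 < ε₂) (hε₃ : 0 < ε₃) (hsum : ε₁ + ε₂ + ε₃ = 1)
    (hmean : ε₁ * μ₁ + ε₂ * μ₂ + ε₃ * μ₃ = 0) :
    μ₂ - vertex (ε₁ + ε₂) (ε₁ * μ₁ + ε₂ * μ₂) =
      (-(ε₁ * μ₁) - (μ₃ - μ₂) * (ε₂ + 2 * ε₁ * ε₃)) / (2 * (1 - ε₁) * (1 - ε₃)) := by
  have hη : ε₁ + ε₂ = 1 - ε₃ := by linarith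
  have hα : ε₁ * μ₁ + ε₂ * μ₂ = -(ε₃ * μ₃) := by linarith
  have h1 : 1 - ε₁ ≠ 0 := by linarith
  have h3 : 1 - ε₃ ≠ 0 := by linarith
  rw [hη, hα, vertex, sub_sub_cancel, eq_div_iff (by positivity)]
  field_simp
  linear_combination (μ₃ - 2 * μ₂) * hsum + hmean

theorem lt_neg_mul_iff_sq_lt (hε₁ : 0 < ε₁) (hε₂ : 0 < ε₂) (hε₃ : 0 < ε₃)
    (hsum : ε₁ + ε₂ + ε₃ = 1) (hmean : ε₁ * μ₁ + ε₂ * μ₂ + ε₃ * μ₃ = 0)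
    (hm2 : ε₁ * μ₁ ^ 2 + ε₂ * μ₂ ^ 2 + ε₃ * μ₃ ^ 2 = 1) (h23 : μ₂ < μ₃) (hμ₁ : μ₁ < 0) :
    (μ₃ - μ₂) * (ε₂ + 2 * ε₁ * ε₃) < -(ε₁ * μ₁) ↔
      (ε₂ + 2 * ε₁ * ε₃) ^ 2 < ε₁ * (ε₂ + 4 * ε₁ * ε₃) * (ε₁ + ε₂) * μ₁ ^ 2 := by
  set K := ε₂ + 2 * ε₁ * ε₃
  have hvar : ε₂ * ε₃ * (μ₃ - μ₂) ^ 2 = (1 - ε₁) * (1 - ε₁ * μ₁ ^ 2) - (ε₁ * μ₁) ^ 2 := by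
    linear_combination (ε₂ + ε₃) * hm2 + (ε₁ * μ₁ - ε₂ * μ₂ - ε₃ * μ₃) * hmean
      + (1 - ε₁ * μ₁ ^ 2) * hsum
  have hK : K ^ 2 + ε₁ * ε₂ * ε₃ = (1 - ε₁) * ((ε₂ + 4 * ε₁ * ε₃) * (ε₁ + ε₂)) := by
    linear_combination (ε₁ * ε₂ + 4 * ε₁ ^ 2 * ε₃) * hsum
  have key : ε₂ * ε₃ * ((-(ε₁ * μ₁)) ^ 2 - ((μ₃ - μ₂) * K) ^ 2) =
      (1 - ε₁) * (ε₁ * (ε₂ + 4 * ε₁ * ε₃) * (ε₁ + ε₂) * μ₁ ^ 2 - K ^ 2) := by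
    linear_combination (-K ^ 2) * hvar + ε₁ * μ₁ ^ 2 * hK
  have hK0 : 0 < K := by positivity
  rw [← pow_lt_pow_iff_left₀ (mul_nonneg (sub_nonneg.2 h23.le) hK0.le) (by nlinarith)
      two_ne_zero,
    ← sub_pos, ← sub_pos (b := K ^ 2), ← mul_pos_iff_of_pos_left (by positivity : 0 < ε₂ * ε₃),
    key, mul_pos_iff_of_pos_left (by linarith)]

theorem lt_neg_threshold_iff (hε₁ : 0 < ε₁) (hε₂ : 0 < ε₂) (hε₃ : 0 < ε₃)
    (hsum : ε₁ + ε₂ + ε₃ = 1) (hμ₁ : μ₁ < 0) :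
    μ₁ < -((2 * ε₂ + 4 * ε₁ * ε₃) / Real.sqrt (4 * ε₁ * ε₃ * (ε₂ + 4 * ε₁ * ε₃))) *
        Real.sqrt (ε₃ / (1 - ε₃)) ↔
      (ε₂ + 2 * ε₁ * ε₃) ^ 2 < ε₁ * (ε₂ + 4 * ε₁ * ε₃) * (ε₁ + ε₂) * μ₁ ^ 2 := by
  have h3 : 1 - ε₃ = ε₁ + ε₂ := by linarith
  set T := (2 * ε₂ + 4 * ε₁ * ε₃) / Real.sqrt (4 * ε₁ * ε₃ * (ε₂ + 4 * ε₁ * ε₃)) *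
    Real.sqrt (ε₃ / (1 - ε₃)) with hT
  have hT0 : 0 < T := by rw [hT, h3]; positivity
  have hk : 0 < ε₁ * (ε₂ + 4 * ε₁ * ε₃) * (ε₁ + ε₂) := by positivity
  have hT2 : T ^ 2 * (ε₁ * (ε₂ + 4 * ε₁ * ε₃) * (ε₁ + ε₂)) = (ε₂ + 2 * ε₁ * ε₃) ^ 2 := by
    rw [hT, mul_pow, div_pow, Real.sq_sqrt (by positivity),
      Real.sq_sqrt (by rw [h3]; positivity), h3]
    field_simp
    ring
  rw [neg_mul, ← hT, ← hT2, mul_comm _ (μ₁ ^ 2), mul_lt_mul_iff_left₀ hk, ← neg_sq μ₁,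
    pow_lt_pow_iff_left₀ hT0.le (by linarith) two_ne_zero]
  constructor <;> intro h <;> linarith

theorem vertex_lt_iff_lt_neg_threshold (hε₁ : 0 < ε₁) (hε₂ : 0 < ε₂) (hε₃ : 0 < ε₃)
    (hsum : ε₁ + ε₂ + ε₃ = 1) (hmean : ε₁ * μ₁ + ε₂ * μ₂ + ε₃ * μ₃ = 0)
    (hm2 : ε₁ * μ₁ ^ 2 + ε₂ * μ₂ ^ 2 + ε₃ * μ₃ ^ 2 = 1) (h23 : μ₂ < μ₃) (hμ₁ : μ₁ < 0) :
    vertex (ε₁ + ε₂) (ε₁ * μ₁ + ε₂ * μ₂) < μ₂ ↔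
      μ₁ < -((2 * ε₂ + 4 * ε₁ * ε₃) / Real.sqrt (4 * ε₁ * ε₃ * (ε₂ + 4 * ε₁ * ε₃))) *
        Real.sqrt (ε₃ / (1 - ε₃)) := by
  rw [← sub_pos, sub_vertex_eq hε₁ hε₂ hε₃ hsum hmean,
    div_pos_iff_of_pos_right (by nlinarith), sub_pos,
    lt_neg_mul_iff_sq_lt hε₁ hε₂ hε₃ hsum hmean hm2 h23 hμ₁,
    lt_neg_threshold_iff hε₁ hε₂ hε₃ hsum hμ₁]

end ThreeAtoms

/-- Let `X` be a standardized 3-Dirac mixture with ordered locations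
`μ₁ < μ₂ < μ₃` and probabilities `ε₁, ε₂, ε₃ > 0` summing to `1`, let `s⋆` be the smallest
minimizer of `s ↦ Var |X - s|`, and set `α₂ = ε₁μ₁ + ε₂μ₂`, `η₂ = ε₁ + ε₂`,
`s₂ = (α₂/2)(1/η₂ - 1/(1 - η₂))`. Then `s⋆ ∈ [μ₁, μ₂]` and `s₂ < μ₂` hold if and only if
`μ₁ < -((2ε₂ + 4ε₁ε₃)/√(4ε₁ε₃(ε₂ + 4ε₁ε₃))) √(ε₃/(1-ε₃))`. -/
theorem stmt_18 (ε₁ ε₂ ε₃ μ₁ μ₂ μ₃ : ℝ)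
    (hε₁ : 0 < ε₁) (hε₂ : 0 < ε₂) (hε₃ : 0 < ε₃) (hsum : ε₁ + ε₂ + ε₃ = 1)
    (h12 : μ₁ < μ₂) (h23 : μ₂ < μ₃)
    (P : Measure ℝ)
    (hP : P = ENNReal.ofReal ε₁ • Measure.dirac μ₁ + ENNReal.ofReal ε₂ • Measure.dirac μ₂ +
      ENNReal.ofReal ε₃ • Measure.dirac μ₃)
    (hmean : ∫ x, x ∂P = 0) (hm2 : ∫ x, x ^ 2 ∂P = 1)
    (sstar : ℝ)
    (hmin : ∀ s : ℝ, variance (fun x => |x - sstar|) P ≤ variance (fun x => |x - s|) P)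
    (hleast : ∀ t : ℝ,
      (∀ s : ℝ, variance (fun x => |x - t|) P ≤ variance (fun x => |x - s|) P) → sstar ≤ t)
    (α₂ η₂ s₂ : ℝ)
    (hα₂ : α₂ = ε₁ * μ₁ + ε₂ * μ₂) (hη₂ : η₂ = ε₁ + ε₂)
    (hs₂ : s₂ = α₂ / 2 * (1 / η₂ - 1 / (1 - η₂))) :
    (sstar ∈ Set.Icc μ₁ μ₂ ∧ s₂ < μ₂) ↔
      μ₁ < -((2 * ε₂ + 4 * ε₁ * ε₃) / Real.sqrt (4 * ε₁ * ε₃ * (ε₂ + 4 * ε₁ * ε₃))) *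
        Real.sqrt (ε₃ / (1 - ε₃)) := by
  obtain rfl : P = threeDirac ε₁ ε₂ ε₃ μ₁ μ₂ μ₃ := hP
  set F := fun t => variance (fun x => |x - t|) (threeDirac ε₁ ε₂ ε₃ μ₁ μ₂ μ₃)
  have hF : ∀ t, F t = 1 + t ^ 2 - (ε₁ * |μ₁ - t| + ε₂ * |μ₂ - t| + ε₃ * |μ₃ - t|) ^ 2 :=
    variance_abs_sub_threeDirac hε₁.le hε₂.le hε₃.le hsum hmean hm2
  rw [integral_threeDirac hε₁.le hε₂.le hε₃.le] at hmean hm2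
  have hμ₁ : μ₁ < 0 := by
    nlinarith [mul_pos hε₂ (sub_pos.2 h12), mul_pos hε₃ (sub_pos.2 (h12.trans h23))]
  subst hs₂ hα₂ hη₂
  rw [← vertex_lt_iff_lt_neg_threshold hε₁ hε₂ hε₃ hsum hmean hm2 h23 hμ₁]
  have hlow : ∀ t ≤ μ₁, F t = 1 := fun t ht => by
    rw [hF, sum_abs_sub_of_le hsum hmean ht (ht.trans h12.le) (ht.trans (h12.trans h23).le)]
    ring
  have hhigh : ∀ t, μ₃ ≤ t → F t = 1 := fun t ht => by
    rw [hF, sum_abs_sub_of_ge hsum hmean ((h12.trans h23).le.trans ht) (h23.le.trans ht) ht]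
    ring
  have hleft : ∀ t ∈ Icc μ₁ μ₂, F t = pieceVar ε₁ (ε₁ * μ₁) t := fun t ht => by
    rw [hF, sum_abs_sub_of_mem_Icc₁₂ hsum hmean ht.1 ht.2 (ht.2.trans h23.le), pieceVar]
  have hright : ∀ t ∈ Icc μ₂ μ₃, F t = pieceVar (ε₁ + ε₂) (ε₁ * μ₁ + ε₂ * μ₂) t :=
    fun t ht => by
      rw [hF, sum_abs_sub_of_mem_Icc₂₃ hsum hmean (h12.le.trans ht.1) ht.1 ht.2, pieceVar]
  have hε₁' : ε₁ ∈ Ioo 0 1 := ⟨hε₁, by linarith⟩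
  exact ⟨And.right, fun hv => ⟨smallest_minimizer_mem_Icc hε₁' ⟨by linarith, by linarith⟩ h12
    hlow hhigh hleft hright (lt_vertex_mul_self hε₁' hμ₁) hv hmin hleast, hv⟩⟩
end
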